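/- Let {Π_ξ} be a finite family of nonzero positive semidefinite operators on ℂ^d with Σ_ξ tr(Π_ξ) = d, and let ℘ = (1/d) Σ_ξ tr(Π_ξ²)/tr(Π_ξ) be its purity. Then Σ_{ξ,η} [tr(Π_ξΠ_η)]² / (tr(Π_ξ)tr(Π_η)) ≥ (d²(1+℘²) − 2d℘)/(d²−1), with equality if and only if Σ_ξ (Π_ξ⊗Π_ξ)/tr(Π_ξ) = ((1+℘)/(d+1)) P₊ + ((1−℘)/(d−1)) P₋ (i.e., {Π_ξ} is a generalized 2-design). -/

import Mathlib

/-!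
Put `F = Σ_ξ (Π_ξ ⊗ Π_ξ) / tr Π_ξ`. Then the left-hand side is `tr F²`, and for the swap `V`,
`tr F = d` and `tr (F V) = d ℘`. The operator `T = ((1 + ℘)/(d + 1)) P₊ + ((1 - ℘)/(d - 1)) P₋` is
the Hilbert–Schmidt orthogonal projection of the Hermitian operator `F` onto `span {1, V}`, so
`0 ≤ tr ((F - T)²) = tr F² - (d²(1 + ℘²) - 2d℘)/(d² - 1)`, with equality exactly when `F = T`.
-/

open Matrix Kronecker ComplexOrder BigOperators

/-- The swap operator `V` on `ℂ^d ⊗ ℂ^d`, `V(x ⊗ y) = y ⊗ x`. -/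
noncomputable def swapOp (d : ℕ) : Matrix (Fin d × Fin d) (Fin d × Fin d) ℂ :=
  fun p q => if p.1 = q.2 ∧ p.2 = q.1 then 1 else 0

/-- Projector onto the symmetric subspace of `ℂ^d ⊗ ℂ^d`. -/
noncomputable def Pplus (d : ℕ) : Matrix (Fin d × Fin d) (Fin d × Fin d) ℂ :=
  (2 : ℂ)⁻¹ • (1 + swapOp d)

/-- Projector onto the antisymmetric subspace of `ℂ^d ⊗ ℂ^d`. -/
noncomputable def Pminus (d : ℕ) : Matrix (Fin d × Fin d) (Fin d × Fin d) ℂ :=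
  (2 : ℂ)⁻¹ • (1 - swapOp d)

/-- Partial trace over the first tensor factor. -/
noncomputable def ptr1 {d : ℕ} (Q : Matrix (Fin d × Fin d) (Fin d × Fin d) ℂ) :
    Matrix (Fin d) (Fin d) ℂ :=
  fun j k => ∑ i, Q (i, j) (i, k)

/-- Partial trace over the second tensor factor. -/
noncomputable def ptr2 {d : ℕ} (Q : Matrix (Fin d × Fin d) (Fin d × Fin d) ℂ) :
    Matrix (Fin d) (Fin d) ℂ :=
  fun i j => ∑ k, Q (i, k) (j, k)

section Swap

variable {d : ℕ}

lemma swapOp_isHermitian : (swapOp d).IsHermitian := by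
  ext ⟨i, j⟩ ⟨k, l⟩
  simp [swapOp, conjTranspose_apply, and_comm, eq_comm]

lemma swapOp_mul_swapOp : swapOp d * swapOp d = 1 := by
  ext ⟨i, j⟩ ⟨k, l⟩
  simp [swapOp, mul_apply, one_apply, Fintype.sum_prod_type, Prod.ext_iff, ite_and, eq_comm]

lemma trace_swapOp : (swapOp d).trace = d := by
  simp only [swapOp, trace, diag, Fintype.sum_prod_type]
  simp [eq_comm]

lemma trace_kronecker_mul_swapOp (M N : Matrix (Fin d) (Fin d) ℂ) :
    ((M ⊗ₖ N) * swapOp d).trace = (M * N).trace := by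
  simp only [swapOp, trace, diag, mul_apply, Fintype.sum_prod_type, kroneckerMap_apply, ite_and,
    mul_ite, mul_one, mul_zero]
  refine Finset.sum_congr rfl fun i _ => Finset.sum_congr rfl fun j _ => ?_
  rw [Finset.sum_comm]
  simp

lemma smul_Pplus_add_smul_Pminus (x y : ℂ) :
    x • Pplus d + y • Pminus d = ((x + y) / 2) • (1 : Matrix _ _ ℂ) + ((x - y) / 2) • swapOp d := by
  simp only [Pplus, Pminus]
  module

lemma trace_sub_smul_one_sub_smul_swapOp_mul_self (F : Matrix (Fin d × Fin d) (Fin d × Fin d) ℂ)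
    (a b : ℂ) :
    ((F - a • 1 - b • swapOp d) * (F - a • 1 - b • swapOp d)).trace
      = (F * F).trace - 2 * a * F.trace - 2 * b * (F * swapOp d).trace
        + (a ^ 2 + b ^ 2) * d ^ 2 + 2 * a * b * d := by
  simp only [Matrix.sub_mul, Matrix.mul_sub, Matrix.smul_mul, Matrix.mul_smul, Matrix.one_mul,
    Matrix.mul_one, swapOp_mul_swapOp, trace_sub, trace_smul, trace_one, trace_swapOp,
    smul_eq_mul, Fintype.card_prod, Fintype.card_fin, trace_mul_comm (swapOp d) F]
  push_cast
  ring

end Swap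

lemma Matrix.IsHermitian.isSelfAdjoint_trace {m R : Type*} [Fintype m] [AddCommMonoid R]
    [StarAddMonoid R] {A : Matrix m m R} (hA : A.IsHermitian) : IsSelfAdjoint A.trace := by
  rw [IsSelfAdjoint, ← trace_conjTranspose, hA.eq]

noncomputable def designOp {ι m : Type*} [Fintype ι] [Fintype m] (E : ι → Matrix m m ℂ) :
    Matrix (m × m) (m × m) ℂ :=
  ∑ i, ((E i).trace)⁻¹ • (E i ⊗ₖ E i)

section DesignOp

variable {ι m : Type*} [Fintype ι] [Fintype m] (E : ι → Matrix m m ℂ)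

lemma trace_designOp : (designOp E).trace = ∑ i, (E i).trace := by
  simp only [designOp, trace_sum, trace_smul, trace_kronecker, smul_eq_mul, ← mul_assoc,
    inv_mul_mul_self]

lemma trace_designOp_mul_self :
    (designOp E * designOp E).trace
      = ∑ i, ∑ j, (E i * E j).trace ^ 2 / ((E i).trace * (E j).trace) := by
  simp only [designOp, Finset.sum_mul_sum, trace_sum, Matrix.smul_mul, Matrix.mul_smul,
    trace_smul, ← mul_kronecker_mul, trace_kronecker, smul_eq_mul]
  refine Finset.sum_congr rfl fun i _ => Finset.sum_congr rfl fun j _ => ?_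
  field_simp

lemma trace_designOp_mul_swapOp {d : ℕ} (E : ι → Matrix (Fin d) (Fin d) ℂ) :
    (designOp E * swapOp d).trace = ∑ i, (E i * E i).trace / (E i).trace := by
  simp only [designOp, Finset.sum_mul, trace_sum, Matrix.smul_mul, trace_smul,
    trace_kronecker_mul_swapOp, smul_eq_mul, inv_mul_eq_div]

lemma designOp_isHermitian (hE : ∀ i, (E i).IsHermitian) : (designOp E).IsHermitian := by
  refine isSelfAdjoint_sum _ fun i _ => IsHermitian.smul ?_ (hE i).isSelfAdjoint_trace.inv₀
  rw [IsHermitian, conjTranspose_kronecker, hE i]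

end DesignOp

lemma le_trace_mul_self_and_eq_iff {d : ℕ} (hd : 2 ≤ d)
    {F : Matrix (Fin d × Fin d) (Fin d × Fin d) ℂ} (hF : F.IsHermitian) {p : ℂ}
    (hp : IsSelfAdjoint p) (htr : F.trace = d) (htrV : (F * swapOp d).trace = d * p) :
    ((d : ℂ) ^ 2 * (1 + p ^ 2) - 2 * d * p) / ((d : ℂ) ^ 2 - 1) ≤ (F * F).trace ∧
      ((F * F).trace = ((d : ℂ) ^ 2 * (1 + p ^ 2) - 2 * d * p) / ((d : ℂ) ^ 2 - 1) ↔
        F = ((1 + p) / ((d : ℂ) + 1)) • Pplus d + ((1 - p) / ((d : ℂ) - 1)) • Pminus d) := by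
  have hdm : (d : ℂ) - 1 ≠ 0 := sub_ne_zero.mpr (mod_cast (by omega : d ≠ 1))
  have hdp : (d : ℂ) + 1 ≠ 0 := mod_cast (by omega : d + 1 ≠ 0)
  have hd2 : (d : ℂ) ^ 2 - 1 ≠ 0 := by
    rw [show (d : ℂ) ^ 2 - 1 = (d - 1) * (d + 1) by ring]
    exact mul_ne_zero hdm hdp
  set a : ℂ := (d - p) / (d ^ 2 - 1) with ha_def
  set b : ℂ := (p * d - 1) / (d ^ 2 - 1) with hb_def
  have ha : IsSelfAdjoint a := ((IsSelfAdjoint.natCast d).sub hp).div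
    (((IsSelfAdjoint.natCast d).pow 2).sub (IsSelfAdjoint.one ℂ))
  have hb : IsSelfAdjoint b := ((hp.mul (IsSelfAdjoint.natCast d)).sub (IsSelfAdjoint.one ℂ)).div
    (((IsSelfAdjoint.natCast d).pow 2).sub (IsSelfAdjoint.one ℂ))
  have hT : ((1 + p) / ((d : ℂ) + 1)) • Pplus d + ((1 - p) / ((d : ℂ) - 1)) • Pminus d
      = a • 1 + b • swapOp d := by
    rw [smul_Pplus_add_smul_Pminus, ha_def, hb_def]
    congr 2 <;> field_simp <;> ring
  set G := F - a • 1 - b • swapOp d with hG_def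
  have hG : G.IsHermitian := (hF.sub (isHermitian_one.smul ha)).sub (swapOp_isHermitian.smul hb)
  have hGG : (Gᴴ * G).trace = (F * F).trace
      - ((d : ℂ) ^ 2 * (1 + p ^ 2) - 2 * d * p) / ((d : ℂ) ^ 2 - 1) := by
    rw [hG.eq, trace_sub_smul_one_sub_smul_swapOp_mul_self, htr, htrV, ha_def, hb_def]
    field_simp
    ring
  rw [hT, ← sub_nonneg, ← sub_eq_zero (b := _ / _), ← hGG,
    trace_conjTranspose_mul_self_eq_zero_iff, hG_def, sub_sub, sub_eq_zero]
  exact ⟨(posSemidef_conjTranspose_mul_self _).trace_nonneg, Iff.rfl⟩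

theorem stmt12_general {d n : ℕ} (hd : 2 ≤ d) (E : Fin n → Matrix (Fin d) (Fin d) ℂ)
    (hE : ∀ ξ, (E ξ).PosSemidef)
    (htr : ∑ ξ, (E ξ).trace = (d : ℂ))
    (p : ℂ) (hp : p = (d : ℂ)⁻¹ * ∑ ξ, (E ξ * E ξ).trace / (E ξ).trace) :
    ((d : ℂ) ^ 2 * (1 + p ^ 2) - 2 * d * p) / ((d : ℂ) ^ 2 - 1)
      ≤ ∑ ξ, ∑ η, ((E ξ * E η).trace) ^ 2 / ((E ξ).trace * (E η).trace) ∧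
    (∑ ξ, ∑ η, ((E ξ * E η).trace) ^ 2 / ((E ξ).trace * (E η).trace)
        = ((d : ℂ) ^ 2 * (1 + p ^ 2) - 2 * d * p) / ((d : ℂ) ^ 2 - 1)
      ↔ ∑ ξ, ((E ξ).trace)⁻¹ • (E ξ ⊗ₖ E ξ)
          = ((1 + p) / ((d : ℂ) + 1)) • Pplus d + ((1 - p) / ((d : ℂ) - 1)) • Pminus d) := by
  have hherm (ξ) : (E ξ).IsHermitian := (hE ξ).isHermitian
  have hp_sa : IsSelfAdjoint p := hp ▸ (IsSelfAdjoint.natCast d).inv₀.mul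
    (isSelfAdjoint_sum _ fun ξ _ =>
      (sq (E ξ) ▸ (hherm ξ).pow 2).isSelfAdjoint_trace.div (hherm ξ).isSelfAdjoint_trace)
  have htrV : (designOp E * swapOp d).trace = d * p := by
    rw [trace_designOp_mul_swapOp, hp, mul_inv_cancel_left₀ (by positivity)]
  rw [← trace_designOp_mul_self]
  exact le_trace_mul_self_and_eq_iff hd (designOp_isHermitian E hherm) hp_sa
    ((trace_designOp E).trans htr) htrV

/-- For a finite family of nonzero positive semidefinite operators on `ℂ^d`
with `Σ_ξ tr(E_ξ) = d` and purity `p = (1/d) Σ_ξ tr(E_ξ²)/tr(E_ξ)`,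
`Σ_{ξ,η} [tr(E_ξE_η)]²/(tr E_ξ tr E_η) ≥ (d²(1+p²) − 2dp)/(d²−1)`, with equality iff the
family is a generalized 2-design. -/
theorem stmt12 {d n : ℕ} (hd : 2 ≤ d) (E : Fin n → Matrix (Fin d) (Fin d) ℂ)
    (hE : ∀ ξ, (E ξ).PosSemidef) (hE0 : ∀ ξ, E ξ ≠ 0)
    (htr : ∑ ξ, (E ξ).trace = (d : ℂ))
    (p : ℂ) (hp : p = (d : ℂ)⁻¹ * ∑ ξ, (E ξ * E ξ).trace / (E ξ).trace) :
    ((d : ℂ) ^ 2 * (1 + p ^ 2) - 2 * d * p) / ((d : ℂ) ^ 2 - 1)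
      ≤ ∑ ξ, ∑ η, ((E ξ * E η).trace) ^ 2 / ((E ξ).trace * (E η).trace) ∧
    (∑ ξ, ∑ η, ((E ξ * E η).trace) ^ 2 / ((E ξ).trace * (E η).trace)
        = ((d : ℂ) ^ 2 * (1 + p ^ 2) - 2 * d * p) / ((d : ℂ) ^ 2 - 1)
      ↔ ∑ ξ, ((E ξ).trace)⁻¹ • (E ξ ⊗ₖ E ξ)
          = ((1 + p) / ((d : ℂ) + 1)) • Pplus d + ((1 - p) / ((d : ℂ) - 1)) • Pminus d) :=
  stmt12_general hd E hE htr p hp
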